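/- arXiv:0812.2718 — 2 statements merged into one kernel-verified Lean document; each statement's English description precedes it below -/
import Mathlib

section
/- Let 𝔽 = ⟨a,b⟩ be the free group of rank 2. The map φ: (ℤ/2ℤ)^𝔽 → (ℤ/2ℤ × ℤ/2ℤ)^𝔽 defined by φ(x)(g) = (x(g) + x(ga), x(g) + x(gb)) is a surjective group homomorphism, where the group operations on (ℤ/2ℤ)^𝔽 and (ℤ/2ℤ × ℤ/2ℤ)^𝔽 are pointwise addition. -/
open MeasureTheory ENNReal

/-- The Bernoulli shift action of a group `G` on `G → K`: `(g • x) f = x (g⁻¹ * f)`. -/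
def bshift (G K : Type*) [Group G] (g : G) (x : G → K) : G → K :=
  fun f => x (g⁻¹ * f)

/-- `μ` is the product of the probability measures `κ i`: it is a probability measure
giving every measurable cylinder set the product of the measures of its sides.
(For probability measures this characterizes the product measure uniquely.) -/
def IsProductMeasure {ι : Type*} {K : ι → Type*} [∀ i, MeasurableSpace (K i)]
    (μ : Measure (∀ i, K i)) (κ : ∀ i, Measure (K i)) : Prop :=
  IsProbabilityMeasure μ ∧
    ∀ (s : Finset ι) (A : ∀ i, Set (K i)), (∀ i ∈ s, MeasurableSet (A i)) →
      μ {x | ∀ i ∈ s, x i ∈ A i} = ∏ i ∈ s, κ i (A i)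

/-- `φ` is a factor map, from the system given by the maps `T g` on `(X, μ)` to the system
given by the maps `S g` on `(Y, ν)`, relative to the invariant set `X'` of full measure. -/
def IsFactorMapOn {ι X Y : Type*} [MeasurableSpace X] [MeasurableSpace Y]
    (T : ι → X → X) (S : ι → Y → Y) (μ : Measure X) (ν : Measure Y)
    (φ : X → Y) (X' : Set X) : Prop :=
  Measurable φ ∧ (∀ g, Set.MapsTo (T g) X' X') ∧ μ X'ᶜ = 0 ∧
    (∀ g, ∀ x ∈ X', φ (T g x) = S g (φ x)) ∧ Measure.map φ μ = ν

/-- `φ` is a factor map from the system `(T, μ)` to the system `(S, ν)`:  it is measurable,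
pushes `μ` forward to `ν`, and is equivariant on some invariant set of full measure. -/
def IsFactorMap {ι X Y : Type*} [MeasurableSpace X] [MeasurableSpace Y]
    (T : ι → X → X) (S : ι → Y → Y) (μ : Measure X) (ν : Measure Y)
    (φ : X → Y) : Prop :=
  ∃ X' : Set X, IsFactorMapOn T S μ ν φ X'

/-- `φ` is a measure-conjugacy: a factor map which is injective on the invariant full-measure
set, with a measurable inverse. -/
def IsMeasureConjugacy {ι X Y : Type*} [MeasurableSpace X] [MeasurableSpace Y]
    (T : ι → X → X) (S : ι → Y → Y) (μ : Measure X) (ν : Measure Y)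
    (φ : X → Y) : Prop :=
  ∃ X' : Set X, IsFactorMapOn T S μ ν φ X' ∧ Set.InjOn φ X' ∧
    ∃ ψ : Y → X, Measurable ψ ∧ ∀ x ∈ X', ψ (φ x) = x

/-- The two systems are measurably conjugate: there are factor maps in both directions that
are inverse to each other almost everywhere. -/
def IsMeasConj {ι X Y : Type*} [MeasurableSpace X] [MeasurableSpace Y]
    (T : ι → X → X) (S : ι → Y → Y) (μ : Measure X) (ν : Measure Y) : Prop :=
  ∃ (φ : X → Y) (ψ : Y → X), IsFactorMap T S μ ν φ ∧ IsFactorMap S T ν μ ψ ∧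
    (∀ᵐ x ∂μ, ψ (φ x) = x) ∧ (∀ᵐ y ∂ν, φ (ψ y) = y)

/-- The entropy `H(κ) = -∑ₖ κ({k}) log κ({k}) ∈ [0,∞]` of a measure on a countable space. -/
noncomputable def measEntropy {K : Type*} [MeasurableSpace K] (κ : Measure K) : ℝ≥0∞ :=
  ∑' k : K, ENNReal.ofReal (Real.negMulLog (κ {k}).toReal)

/-- The free group `𝔽 = ⟨a,b⟩` of rank 2. -/
abbrev F2 : Type := FreeGroup (Fin 2)

/-- The first free generator `a` of `𝔽`. -/
def fa : F2 := FreeGroup.of 0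

/-- The second free generator `b` of `𝔽`. -/
def fb : F2 := FreeGroup.of 1

/-- The Ornstein–Weiss map `φ(x)(g) = (x(g) + x(ga), x(g) + x(gb))`. -/
def owMap (x : F2 → ZMod 2) : F2 → ZMod 2 × ZMod 2 :=
  fun g => (x g + x (g * fa), x g + x (g * fb))

/-- The uniform probability measure `u₂` on `ℤ/2ℤ`. -/
noncomputable def u2 : Measure (ZMod 2) := (PMF.uniformOfFintype (ZMod 2)).toMeasure

/-- The uniform probability measure `u₄` on `ℤ/2ℤ × ℤ/2ℤ`. -/
noncomputable def u4 : Measure (ZMod 2 × ZMod 2) :=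
  (PMF.uniformOfFintype (ZMod 2 × ZMod 2)).toMeasure

/-!
The right Cayley graph of a free group is a tree, so any labelling `c g s` of its edges
`g — g s` is the difference `x (g s) - x g` of a function `x` on the vertices: moving along a
generator `s` from `(g, t)` to `(g s, t + c g s)` defines an action of the free group on
`FreeGroup α × A` (there are no relations to check), and `x` is read off the orbit of
`(1, 0)`. Over `ℤ/2ℤ` the difference is also the sum `x g + x (g s)`, which makes `owMap` onto.
-/

namespace FreeGroup

variable {α A : Type*} [AddGroup A]

def edgeShear (c : FreeGroup α → α → A) (i : α) : Equiv.Perm (FreeGroup α × A) :=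
  (Equiv.mulRight (of i)).prodShear fun g => Equiv.addRight (c g i)

/-- Generators act by right multiplication, hence the opposite group. -/
def edgeShearAction (c : FreeGroup α → α → A) :
    FreeGroup α →* (Equiv.Perm (FreeGroup α × A))ᵐᵒᵖ :=
  lift fun i => .op (edgeShear c i)

lemma edgeShearAction_mul_of_apply (c : FreeGroup α → α → A) (g : FreeGroup α) (i : α)
    (p : FreeGroup α × A) :
    (edgeShearAction c (g * of i)).unop p = edgeShear c i ((edgeShearAction c g).unop p) := by
  simp [edgeShearAction, lift_apply_of, Equiv.Perm.mul_apply]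

lemma fst_edgeShearAction_apply (c : FreeGroup α → α → A) (g : FreeGroup α)
    (p : FreeGroup α × A) : ((edgeShearAction c g).unop p).1 = p.1 * g := by
  induction g using FreeGroup.induction_on generalizing p with
  | C1 => simp
  | of i => simpa [edgeShear] using congrArg Prod.fst (edgeShearAction_mul_of_apply c 1 i p)
  | inv_of i ih =>
    have h := ih ((edgeShearAction c (of i)).unop⁻¹ p)
    rw [Equiv.Perm.inv_def, Equiv.apply_symm_apply] at h
    rw [_root_.map_inv, MulOpposite.unop_inv, Equiv.Perm.inv_def, eq_mul_inv_iff_mul_eq, h]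
  | mul g h ihg ihh => simp [Equiv.Perm.mul_apply, ihg, ihh, mul_assoc]

theorem exists_apply_mul_of_eq_add (c : FreeGroup α → α → A) :
    ∃ x : FreeGroup α → A, ∀ g i, x (g * of i) = x g + c g i := by
  refine ⟨fun g => ((edgeShearAction c g).unop (1, 0)).2, fun g i => ?_⟩
  have orbit_eq :
      (edgeShearAction c g).unop (1, 0) = (g, ((edgeShearAction c g).unop (1, 0)).2) :=
    Prod.ext (by simp [fst_edgeShearAction_apply]) rfl
  dsimp only
  rw [edgeShearAction_mul_of_apply, orbit_eq]
  rfl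

end FreeGroup

lemma owMap_surjective : Function.Surjective owMap := by
  intro y
  obtain ⟨x, hx⟩ :=
    FreeGroup.exists_apply_mul_of_eq_add fun g (i : Fin 2) => ![(y g).1, (y g).2] i
  refine ⟨x, funext fun g => ?_⟩
  simp [owMap, fa, fb, hx, ← add_assoc, CharTwo.add_self_eq_zero]

lemma owMap_add (x y : F2 → ZMod 2) : owMap (x + y) = owMap x + owMap y := by
  funext g
  simp only [owMap, Pi.add_apply, Prod.mk_add_mk]
  congr 1 <;> abel

/-- The Ornstein–Weiss map `φ(x)(g) = (x(g) + x(ga), x(g) + x(gb))` is a surjective group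
homomorphism for the pointwise group structures on `(ℤ/2ℤ)^𝔽` and `(ℤ/2ℤ × ℤ/2ℤ)^𝔽`. -/
theorem owMap_surjective_addHom :
    Function.Surjective owMap ∧
    ∀ x y : F2 → ZMod 2, owMap (x + y) = owMap x + owMap y :=
  ⟨owMap_surjective, owMap_add⟩
end

section
/- (Tímar.) Let 𝔽 = ⟨a,b⟩ be the free group of rank 2, let U₂ = ℤ/2ℤ with the uniform probability measure u₂, and let U_∞ = (ℤ/2ℤ)^ℕ with the product measure u_∞ = u₂^ℕ. Then there exists a factor map Φ from the Bernoulli shift (𝔽, U₂^𝔽, u₂^𝔽) onto the Bernoulli shift (𝔽, U_∞^𝔽, u_∞^𝔽). -/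
open MeasureTheory ENNReal

/-!
Write `Δ_s x (g) = x (g * s) - x g` for the right difference along `s`. The map
`x ↦ ((Δ_a Δ_bⁿ x)(g))_{(g, n)}` commutes with the shift, since right differences commute with
left translations, and it is additive. On a free group any prescribed family of differences
`Δ_{of i} y = c i` has a solution `y` (the Cayley graph is a tree, so one integrates along it),
and iterating this shows that the map is onto on every finite set of coordinates. An additive
surjection onto a finite group carries a translation-invariant probability measure to the unique
invariant one, the uniform measure; hence `u₂^𝔽` is carried to `u₂^(𝔽 × ℕ) ≅ (u₂^ℕ)^𝔽`.
-/

open MeasureTheory Measure Function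

theorem IsProductMeasure.eq_infinitePi {ι : Type*} {K : ι → Type*} [∀ i, MeasurableSpace (K i)]
    {μ : Measure (∀ i, K i)} {κ : ∀ i, Measure (K i)} [∀ i, IsProbabilityMeasure (κ i)]
    (h : IsProductMeasure μ κ) : μ = infinitePi κ :=
  Measure.eq_infinitePi κ fun s t ht => h.2 s t fun i _ => ht i

namespace MeasureTheory.Measure

section FiniteGroup

variable {G : Type*} [AddGroup G] [MeasurableSpace G] [MeasurableAdd G]

theorem measure_singleton_eq_measure_singleton_zero (μ : Measure G) [μ.IsAddLeftInvariant]
    (g : G) : μ {g} = μ {0} := by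
  rw [← measure_preimage_add μ g {g}, Set.preimage_add_left_singleton, neg_add_cancel]

theorem card_mul_measure_singleton_zero [Fintype G] [MeasurableSingletonClass G] (μ : Measure G)
    [IsProbabilityMeasure μ] [μ.IsAddLeftInvariant] : (Fintype.card G : ENNReal) * μ {0} = 1 := by
  rw [← measure_univ (μ := μ), ← Finset.coe_univ, ← sum_measure_singleton, ← nsmul_eq_mul,
    ← Finset.card_univ, ← Finset.sum_const]
  simp_rw [measure_singleton_eq_measure_singleton_zero μ]

theorem eq_of_isAddLeftInvariant [Finite G] [MeasurableSingletonClass G] (μ ν : Measure G)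
    [IsProbabilityMeasure μ] [IsProbabilityMeasure ν] [μ.IsAddLeftInvariant]
    [ν.IsAddLeftInvariant] : μ = ν := by
  have := Fintype.ofFinite G
  have hzero : μ {0} = ν {0} := by
    have hcard : (Fintype.card G : ENNReal) ≠ 0 := by simp
    rw [← ENNReal.mul_right_inj hcard (ENNReal.natCast_ne_top _),
      card_mul_measure_singleton_zero, card_mul_measure_singleton_zero]
  exact ext_iff_singleton.2 fun g => by
    rw [measure_singleton_eq_measure_singleton_zero, hzero,
      ← measure_singleton_eq_measure_singleton_zero]

end FiniteGroup

instance isAddLeftInvariant_uniformOfFintype {G : Type*} [AddGroup G] [Fintype G]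
    [MeasurableSpace G] [MeasurableAdd G] [MeasurableSingletonClass G] :
    (PMF.uniformOfFintype G).toMeasure.IsAddLeftInvariant := by
  refine ⟨fun g => ext_iff_singleton.2 fun h => ?_⟩
  rw [map_apply (measurable_const_add g) (measurableSet_singleton h),
    Set.preimage_add_left_singleton]
  simp only [PMF.toMeasure_apply_singleton _ _ (measurableSet_singleton _),
    PMF.uniformOfFintype_apply]

instance isAddLeftInvariant_infinitePi {ι : Type*} {G : ι → Type*} [∀ i, AddGroup (G i)]
    [∀ i, MeasurableSpace (G i)] [∀ i, MeasurableAdd (G i)] (μ : ∀ i, Measure (G i))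
    [∀ i, IsProbabilityMeasure (μ i)] [∀ i, (μ i).IsAddLeftInvariant] :
    (infinitePi μ).IsAddLeftInvariant :=
  ⟨fun g => by
    have := infinitePi_map_pi μ (f := fun i => (g i + ·)) fun i => measurable_const_add (g i)
    simp only [map_add_left_eq_self] at this
    exact this⟩

theorem map_eq_infinitePi_of_surjective_restrict {H T A : Type*} [AddGroup H] [MeasurableSpace H]
    [MeasurableAdd H] [AddGroup A] [Finite A] [MeasurableSpace A] [MeasurableSingletonClass A]
    [MeasurableAdd A] (μ : Measure H) [IsProbabilityMeasure μ] [μ.IsAddLeftInvariant]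
    (ν : Measure A) [IsProbabilityMeasure ν] [ν.IsAddLeftInvariant] (L : H →+ (T → A))
    (hL : Measurable L) (hsurj : ∀ s : Finset T, Surjective fun h => s.restrict (L h)) :
    μ.map L = infinitePi fun _ : T => ν := by
  refine eq_infinitePi _ fun s t ht => ?_
  let Ls : H →+ (s → A) :=
    (AddMonoidHom.pi fun i : s => Pi.evalAddMonoidHom (fun _ : T => A) (i : T)).comp L
  have hLs : Measurable Ls := (s.measurable_restrict).comp hL
  have hmap : μ.map Ls = Measure.pi fun _ : s => ν := by
    have := isAddLeftInvariant_map (μ := μ) Ls.toAddHom hLs (hsurj s)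
    have := isProbabilityMeasure_map (μ := μ) hLs.aemeasurable
    exact eq_of_isAddLeftInvariant _ _
  calc μ.map L (Set.pi s t) = μ.map Ls (Set.univ.pi fun i : s => t i) := by
        rw [map_apply hL (.pi s.countable_toSet fun i _ => ht i),
          map_apply hLs (.univ_pi fun i => ht i)]
        congr 1; ext x; simp [Ls]
    _ = ∏ i ∈ s, ν (t i) := by rw [hmap, pi_pi, Finset.prod_coe_sort s fun i => ν (t i)]

end MeasureTheory.Measure

def translationAut (G A : Type*) [Group G] [AddGroup A] :
    G →* MulAut (Multiplicative (G → A)) where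
  toFun g :=
    { toFun z := .ofAdd fun h => z.toAdd (g⁻¹ * h)
      invFun z := .ofAdd fun h => z.toAdd (g * h)
      left_inv z := by simp
      right_inv z := by simp
      map_mul' _ _ := rfl }
  map_one' := by ext; simp
  map_mul' g g' := by ext; simp [MulAut.mul_apply, mul_assoc]

theorem FreeGroup.exists_add_of_mul_of {ι A : Type*} [AddGroup A]
    (ℓ : FreeGroup ι → ι → A) : ∃ y : FreeGroup ι → A, ∀ g i, y (g * of i) = y g + ℓ g i := by
  -- `y w` is the `1`-coordinate of the left component of the image of `w` in the wreath product
  let Ψ : FreeGroup ι →* Multiplicative (FreeGroup ι → A) ⋊[translationAut _ A] FreeGroup ι :=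
    lift fun i => ⟨.ofAdd fun h => ℓ h⁻¹ i, of i⟩
  have hright : SemidirectProduct.rightHom.comp Ψ = MonoidHom.id _ :=
    ext_hom _ _ fun i => by simp [Ψ]
  refine ⟨fun w => (Ψ w).left.toAdd 1, fun g i => ?_⟩
  show (Ψ (g * of i)).left.toAdd 1 = (Ψ g).left.toAdd 1 + ℓ g i
  have hg : (Ψ g).right = g := congr($hright g)
  have hof : Ψ (of i) = ⟨.ofAdd fun h => ℓ h⁻¹ i, of i⟩ := lift_apply_of
  rw [_root_.map_mul, SemidirectProduct.mul_left, hg, hof]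
  simp [translationAut]

section RightDiff

variable {G A : Type*} [Group G] [AddCommGroup A]

def rightDiff (s : G) : AddMonoid.End (G → A) where
  toFun x g := x (g * s) - x g
  map_zero' := by ext; simp only [Pi.zero_apply, sub_self]
  map_add' x y := by ext; simp only [Pi.add_apply]; abel

@[simp]
theorem rightDiff_apply (s : G) (x : G → A) (g : G) : rightDiff s x g = x (g * s) - x g := rfl

theorem rightDiff_bshift (s u : G) (x : G → A) :
    rightDiff s (bshift G A u x) = bshift G A u (rightDiff s x) := by
  ext g
  simp [bshift, mul_assoc]

theorem measurable_rightDiff [MeasurableSpace A] [MeasurableSub₂ A] (s : G) :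
    Measurable (rightDiff s : (G → A) → G → A) :=
  measurable_pi_lambda _ fun _ => (measurable_pi_apply _).sub (measurable_pi_apply _)

def timarMap (a b : G) : (G → A) →+ (G × ℕ → A) :=
  AddMonoidHom.pi fun p =>
    (Pi.evalAddMonoidHom (fun _ => A) p.1).comp (rightDiff a * rightDiff b ^ p.2)

theorem timarMap_apply (a b : G) (x : G → A) (p : G × ℕ) :
    timarMap a b x p = rightDiff a ((rightDiff b)^[p.2] x) p.1 :=
  rfl

theorem curry_timarMap_bshift (a b u : G) (x : G → A) :
    Function.curry (timarMap a b (bshift G A u x)) =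
      bshift G (ℕ → A) u (Function.curry (timarMap a b x)) := by
  have hcomm : Function.Commute (rightDiff b : (G → A) → G → A) (bshift G A u) :=
    fun x => rightDiff_bshift b u x
  ext g n
  rw [Function.curry_apply, timarMap_apply, hcomm.iterate_left n x, rightDiff_bshift]
  rfl

theorem measurable_timarMap [MeasurableSpace A] [MeasurableSub₂ A] (a b : G) :
    Measurable (timarMap a b : (G → A) → G × ℕ → A) := by
  refine measurable_pi_lambda _ fun p => ?_
  exact (measurable_pi_apply p.1).comp
    ((measurable_rightDiff a).comp ((measurable_rightDiff b).iterate p.2))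

end RightDiff

namespace FreeGroup

variable {ι A : Type*} [AddCommGroup A]

theorem exists_rightDiff_eq (c : ι → FreeGroup ι → A) : ∃ y, ∀ i, rightDiff (of i) y = c i := by
  obtain ⟨y, hy⟩ := exists_add_of_mul_of fun g i => c i g
  exact ⟨y, fun i => funext fun g => by simp [hy]⟩

theorem exists_rightDiff_rightDiff_iterate_eq {a b : ι} (hab : a ≠ b) (N : ℕ)
    (c : ℕ → FreeGroup ι → A) :
    ∃ x, ∀ n < N, rightDiff (of a) ((rightDiff (of b))^[n] x) = c n := by
  induction N generalizing c with
  | zero => exact ⟨0, by simp⟩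
  | succ N ih =>
    classical
    obtain ⟨w, hw⟩ := ih (c ∘ Nat.succ)
    obtain ⟨y, hy⟩ := exists_rightDiff_eq fun i => if i = a then c 0 else w
    refine ⟨y, fun n hn => ?_⟩
    cases n with
    | zero => simpa using hy a
    | succ n =>
      rw [Function.iterate_succ_apply, hy b, if_neg hab.symm]
      exact hw n (by omega)

theorem surjective_restrict_timarMap {a b : ι} (hab : a ≠ b) (s : Finset (FreeGroup ι × ℕ)) :
    Surjective fun x => s.restrict (timarMap (A := A) (of a) (of b) x) := by
  classical
  intro v
  obtain ⟨x, hx⟩ := exists_rightDiff_rightDiff_iterate_eq hab (s.sup Prod.snd + 1)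
    fun n g => if h : (g, n) ∈ s then v ⟨_, h⟩ else 0
  refine ⟨x, funext fun p => ?_⟩
  have := congrFun (hx p.1.2 (Nat.lt_succ_of_le (Finset.le_sup p.2))) p.1.1
  simpa [timarMap_apply, p.2] using this

end FreeGroup

instance : IsProbabilityMeasure u2 := by
  unfold u2; infer_instance

instance : u2.IsAddLeftInvariant := by
  unfold u2; infer_instance

/-- **Tímar.** There is a factor map from the Bernoulli shift `(𝔽, U₂^𝔽, u₂^𝔽)` onto the
Bernoulli shift `(𝔽, U_∞^𝔽, u_∞^𝔽)`, where `U_∞ = (ℤ/2ℤ)^ℕ` and `u_∞ = u₂^ℕ`. -/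
theorem timar_factor_map
    (uinf : Measure (ℕ → ZMod 2)) (huinf : IsProductMeasure uinf (fun _ => u2))
    (μ₂ : Measure (F2 → ZMod 2)) (hμ₂ : IsProductMeasure μ₂ (fun _ => u2))
    (μinf : Measure (F2 → ℕ → ZMod 2)) (hμinf : IsProductMeasure μinf (fun _ => uinf)) :
    ∃ Φ : (F2 → ZMod 2) → F2 → ℕ → ZMod 2,
      IsFactorMap (bshift F2 (ZMod 2)) (bshift F2 (ℕ → ZMod 2)) μ₂ μinf Φ := by
  obtain rfl := huinf.eq_infinitePi
  obtain rfl := hμ₂.eq_infinitePi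
  obtain rfl := hμinf.eq_infinitePi
  have hcurry := (MeasurableEquiv.curry F2 ℕ (ZMod 2)).measurable
  have hmeas := measurable_timarMap (A := ZMod 2) fa fb
  refine ⟨fun x => Function.curry (timarMap fa fb x), Set.univ, hcurry.comp hmeas,
    fun _ => Set.mapsTo_univ _ _, by simp, fun u x _ => curry_timarMap_bshift fa fb u x, ?_⟩
  have hmap : (infinitePi fun _ : F2 => u2).map (timarMap fa fb) =
      infinitePi fun _ : F2 × ℕ => u2 :=
    map_eq_infinitePi_of_surjective_restrict _ _ _ hmeas
      (FreeGroup.surjective_restrict_timarMap (ι := Fin 2) (by decide))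
  rw [← infinitePi_map_curry, ← hmap, map_map hcurry hmeas]
  rfl
end
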